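/- arXiv:1903.08591 — 2 statements merged into one kernel-verified Lean document; each statement's English description precedes it below -/
import Mathlib

section
/- Let f be a piecewise contracting interval map and x ∈ X̃ := ⋂_{n≥0} f^{-n}(X \ Δ). Then the ω-limit set ω(x) is nonempty, compact, and pseudo-invariant, i.e. for every x₀ ∈ ω(x) the left limit lim_{y→x₀⁻} f(y) or the right limit lim_{y→x₀⁺} f(y) belongs to ω(x). -/
open Filter Topology Set

/-- A piecewise contracting interval map on `X = [c 0, c N]` with contraction pieces
`X_i` delimited by the points `c 0 < c 1 < … < c N`, contraction rate `lam ∈ (0,1)`,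
and `fe i` the (unique) continuous `lam`-Lipschitz extension of `f` restricted to the
`i`-th piece to its closure `[c (i-1), c i]`. The pieces are
`X_1 = [c 0, c 1)`, `X_i = (c (i-1), c i)` for `1 < i < N`, `X_N = (c (N-1), c N]`. -/
structure PCIM where
  N : ℕ
  hN : 2 ≤ N
  c : ℕ → ℝ
  lam : ℝ
  f : ℝ → ℝ
  fe : ℕ → ℝ → ℝ
  hc : StrictMonoOn c (Set.Iic N)
  hlam : lam ∈ Set.Ioo (0 : ℝ) 1
  hmap : Set.MapsTo f (Set.Icc (c 0) (c N)) (Set.Icc (c 0) (c N))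
  hfe_lip : ∀ i, 1 ≤ i → i ≤ N →
    ∀ x ∈ Set.Icc (c (i - 1)) (c i), ∀ y ∈ Set.Icc (c (i - 1)) (c i),
      |fe i x - fe i y| ≤ lam * |x - y|
  hfe_eq : ∀ i, 1 ≤ i → i ≤ N → ∀ x ∈ Set.Ioo (c (i - 1)) (c i), fe i x = f x
  hfe_left : fe 1 (c 0) = f (c 0)
  hfe_right : fe N (c N) = f (c N)

namespace PCIM

variable (P : PCIM)

/-- The phase space `X = [c 0, c N]`. -/
def X : Set ℝ := Set.Icc (P.c 0) (P.c P.N)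

/-- The `i`-th contraction piece (`1 ≤ i ≤ N`). -/
def piece (i : ℕ) : Set ℝ :=
  Set.Ioo (P.c (i - 1)) (P.c i)
    ∪ (if i = 1 then {P.c 0} else (∅ : Set ℝ))
    ∪ (if i = P.N then {P.c P.N} else (∅ : Set ℝ))

/-- `Δ`, the set of interior boundary points of the pieces. -/
def Δ : Set ℝ := {y | ∃ i, 1 ≤ i ∧ i < P.N ∧ y = P.c i}

/-- `X̃ = ⋂ n, f⁻ⁿ(X \ Δ)`: points whose whole forward orbit stays in `X` and avoids `Δ`. -/
def Xt : Set ℝ := {x | ∀ n : ℕ, P.f^[n] x ∈ P.X \ P.Δ}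

/-- Forward orbit of `x`. -/
def orbit (x : ℝ) : Set ℝ := Set.range fun n : ℕ => P.f^[n] x

/-- The ω-limit set of `x`: limits of subsequences of the forward orbit. -/
def omega (x : ℝ) : Set ℝ :=
  {y | ∃ φ : ℕ → ℕ, StrictMono φ ∧
    Filter.Tendsto (fun n => P.f^[φ n] x) Filter.atTop (nhds y)}

/-- `d_i^- = f_i (c_i)`, the left lateral limit of `f` at `c i`. -/
def dminus (i : ℕ) : ℝ := P.fe i (P.c i)

/-- `d_i^+ = f_{i+1} (c_i)`, the right lateral limit of `f` at `c i`. -/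
def dplus (i : ℕ) : ℝ := P.fe (i + 1) (P.c i)

/-- `D⁻ = {d_1^-, …, d_{N-1}^-}`. -/
def Dminus : Set ℝ := {y | ∃ i, 1 ≤ i ∧ i < P.N ∧ y = P.dminus i}

/-- `D⁺ = {d_1^+, …, d_{N-1}^+}`. -/
def Dplus : Set ℝ := {y | ∃ i, 1 ≤ i ∧ i < P.N ∧ y = P.dplus i}

/-- `D`, the set of all one-sided limits of `f` at endpoints of the pieces. -/
def D : Set ℝ := P.Dminus ∪ P.Dplus ∪ {P.fe 1 (P.c 0), P.fe P.N (P.c P.N)}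

/-- `A` is pseudo-invariant: for every `x ∈ A` at least one one-sided limit of `f`
at `x` (i.e. some `fe i x` with `x` in the closure of the `i`-th piece) belongs to `A`. -/
def PseudoInvariant (A : Set ℝ) : Prop :=
  ∀ x ∈ A, ∃ i, 1 ≤ i ∧ i ≤ P.N ∧ x ∈ Set.Icc (P.c (i - 1)) (P.c i) ∧ P.fe i x ∈ A

/-- `F_i(A) = closure (f (A ∩ X_i))`. -/
def Fmap (i : ℕ) (A : Set ℝ) : Set ℝ := closure (P.f '' (A ∩ P.piece i))

/-- For a word `w = [i_1, …, i_n]`, the set `F_{i_n} ∘ … ∘ F_{i_1} (X)`. -/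
def atomOf (w : List ℕ) : Set ℝ := w.foldl (fun S i => P.Fmap i S) P.X

/-- `A` is an atom of generation `n`. -/
def IsAtomGen (n : ℕ) (A : Set ℝ) : Prop :=
  ∃ w : List ℕ, w.length = n ∧ (∀ i ∈ w, 1 ≤ i ∧ i ≤ P.N) ∧
    A = P.atomOf w ∧ A.Nonempty

/-- `Lam n` is `Λ_{n+1}` of the paper: `Λ_1 = closure (f(X \ Δ))`,
`Λ_{n+1} = closure (f(Λ_n \ Δ))`. -/
def Lam (P : PCIM) : ℕ → Set ℝ
  | 0 => closure (P.f '' (P.X \ P.Δ))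
  | n + 1 => closure (P.f '' (P.Lam n \ P.Δ))

/-- The attractor `Λ = ⋂_{n ≥ 1} Λ_n`. -/
def attractor : Set ℝ := ⋂ n : ℕ, P.Lam n

/-- `c i ∈ Δ_lr(x)`: the boundary point `c i` is left-right recurrently visited by the
orbit of `x`. -/
def lrVisited (x : ℝ) (i : ℕ) : Prop :=
  1 ≤ i ∧ i < P.N ∧
  ∃ l r : ℕ → ℕ, StrictMono l ∧ StrictMono r ∧
    (∀ j, P.f^[l j] x ∈ P.piece i) ∧ (∀ j, P.f^[r j] x ∈ P.piece (i + 1)) ∧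
    Filter.Tendsto (fun j => P.f^[l j] x) Filter.atTop (nhds (P.c i)) ∧
    Filter.Tendsto (fun j => P.f^[r j] x) Filter.atTop (nhds (P.c i))

/-- `c i ∈ Δ_lr`: `c i` is left-right recurrently visited by the orbit of some point
of `X̃`. -/
def inΔlr (i : ℕ) : Prop := ∃ x ∈ P.Xt, P.lrVisited x i

/-- The set `Δ_lr ⊆ Δ`. -/
def ΔlrSet : Set ℝ := {y | ∃ i, P.inΔlr i ∧ y = P.c i}

/-- The relation `∼⁺` on `Δ_lr`: `c_i ∼⁺ c_j` iff `c_i = c_j` or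
(`c_i ∈ Δ_lr(d_j^+)` and `c_j ∈ Δ_lr(d_i^+)`). -/
def simP (a b : ℝ) : Prop :=
  a = b ∨ ∃ i j, P.inΔlr i ∧ P.inΔlr j ∧ a = P.c i ∧ b = P.c j ∧
    P.lrVisited (P.dplus j) i ∧ P.lrVisited (P.dplus i) j

/-- The relation `≼⁺` (on representatives): `[c_i] ≼⁺ [c_j]` iff `[c_i] = [c_j]` or
`c_i ∈ Δ_lr(d_j^+)`. -/
def preP (a b : ℝ) : Prop :=
  P.simP a b ∨ ∃ i j, P.inΔlr i ∧ P.inΔlr j ∧ a = P.c i ∧ b = P.c j ∧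
    P.lrVisited (P.dplus j) i

/-- `[c i]` is a minimal class for the partial order `≼⁺`. -/
def MinimalClass (i : ℕ) : Prop :=
  P.inΔlr i ∧ ∀ j, P.inΔlr j → P.preP (P.c j) (P.c i) → P.simP (P.c j) (P.c i)

/-- `f` is injective on each contraction piece. -/
def InjPieces : Prop := ∀ i, 1 ≤ i → i ≤ P.N → Set.InjOn P.f (P.piece i)

/-- `f` is (strictly) increasing on each contraction piece. -/
def IncrPieces : Prop := ∀ i, 1 ≤ i → i ≤ P.N → StrictMonoOn P.f (P.piece i)

/-- `x` is a periodic point of `f`. -/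
def IsPeriodic (x : ℝ) : Prop := ∃ p : ℕ, 1 ≤ p ∧ P.f^[p] x = x

/-- `η` is the itinerary of `x`: `f^[n] x ∈ X_{η n}` for all `n`. -/
def IsItinerary (x : ℝ) (η : ℕ → ℕ) : Prop :=
  ∀ n, 1 ≤ η n ∧ η n ≤ P.N ∧ P.f^[n] x ∈ P.piece (η n)

end PCIM

/-- The word of length `n` of the sequence `η` starting at position `t`. -/
def wordAt (η : ℕ → ℕ) (t n : ℕ) : List ℕ := (List.range n).map fun m => η (t + m)

/-- The complexity function of the sequence `η`: the number of distinct words of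
length `n` occurring in `η`. -/
noncomputable def complexity (η : ℕ → ℕ) (n : ℕ) : ℕ := Set.ncard {w : List ℕ | ∃ t, w = wordAt η t n}

/-!
The orbit of `x` stays in the compact interval `X`, so `ω(x)` is a nonempty closed subset of it.
For pseudo-invariance, take `f^[φ n] x → x₀`. By pigeonhole, infinitely many of these points lie
in a single piece `X_i`; along them `f = f_i`, and `f_i` is continuous on the closure of `X_i`,
so `f^[φ n + 1] x = f_i (f^[φ n] x) → f_i x₀`, which therefore lies in `ω(x)`.
-/

namespace PCIM

variable (P : PCIM)

lemma c_mono {i j : ℕ} (hij : i ≤ j) (hj : j ≤ P.N) : P.c i ≤ P.c j :=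
  P.hc.monotoneOn (mem_Iic.2 (hij.trans hj)) (mem_Iic.2 hj) hij

lemma mem_piece_iff {i : ℕ} {y : ℝ} :
    y ∈ P.piece i ↔
      y ∈ Ioo (P.c (i - 1)) (P.c i) ∨ (i = 1 ∧ y = P.c 0) ∨ (i = P.N ∧ y = P.c P.N) := by
  unfold piece
  split_ifs <;> simp_all <;> tauto

lemma piece_subset_Icc {i : ℕ} (h1 : 1 ≤ i) (hN : i ≤ P.N) :
    P.piece i ⊆ Icc (P.c (i - 1)) (P.c i) := by
  intro y hy
  rcases P.mem_piece_iff.1 hy with hy | ⟨rfl, rfl⟩ | ⟨rfl, rfl⟩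
  · exact Ioo_subset_Icc_self hy
  · exact ⟨le_rfl, P.c_mono zero_le_one hN⟩
  · exact ⟨P.c_mono (Nat.sub_le _ _) le_rfl, le_rfl⟩

lemma f_eq_fe_of_mem_piece {i : ℕ} (h1 : 1 ≤ i) (hN : i ≤ P.N) {y : ℝ} (hy : y ∈ P.piece i) :
    P.f y = P.fe i y := by
  rcases P.mem_piece_iff.1 hy with hy | ⟨rfl, rfl⟩ | ⟨rfl, rfl⟩
  · exact (P.hfe_eq i h1 hN y hy).symm
  · exact P.hfe_left.symm
  · exact P.hfe_right.symm

lemma continuousOn_fe {i : ℕ} (h1 : 1 ≤ i) (hN : i ≤ P.N) :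
    ContinuousOn (P.fe i) (Icc (P.c (i - 1)) (P.c i)) :=
  (LipschitzOnWith.of_dist_le_mul (K := ⟨P.lam, P.hlam.1.le⟩) fun y hy z hz => by
    rw [Real.dist_eq, Real.dist_eq]
    exact P.hfe_lip i h1 hN y hy z hz).continuousOn

/-- The least `i ≥ 1` with `y ≤ c i` gives the piece; `y ∉ Δ` excludes the interior endpoints. -/
lemma exists_mem_piece_of_mem_X_diff_Δ {y : ℝ} (hy : y ∈ P.X \ P.Δ) :
    ∃ i, 1 ≤ i ∧ i ≤ P.N ∧ y ∈ P.piece i := by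
  obtain ⟨⟨hy0, hyN⟩, hyΔ⟩ := hy
  have hex : ∃ i, 1 ≤ i ∧ y ≤ P.c i := ⟨P.N, one_le_two.trans P.hN, hyN⟩
  obtain ⟨i, ⟨hi1, hyi⟩, hmin⟩ : ∃ i, (1 ≤ i ∧ y ≤ P.c i) ∧ ∀ m < i, ¬(1 ≤ m ∧ y ≤ P.c m) := by
    classical
    exact ⟨Nat.find hex, Nat.find_spec hex, fun m => Nat.find_min hex⟩
  have hiN : i ≤ P.N := by
    by_contra! h
    exact hmin P.N h ⟨one_le_two.trans P.hN, hyN⟩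
  have hlow : P.c (i - 1) ≤ y := by
    rcases Nat.lt_or_ge 1 i with h | h
    · by_contra! hlt
      exact hmin (i - 1) (by omega) ⟨by omega, hlt.le⟩
    · rwa [show i - 1 = 0 by omega]
  rcases hyi.eq_or_lt with rfl | hlt
  · obtain rfl : i = P.N := by
      by_contra h
      exact hyΔ ⟨i, hi1, lt_of_le_of_ne hiN h, rfl⟩
    exact ⟨P.N, hi1, le_rfl, P.mem_piece_iff.2 (Or.inr (Or.inr ⟨rfl, rfl⟩))⟩
  · rcases hlow.eq_or_lt with rfl | hlt0
    · obtain rfl : i = 1 := by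
        by_contra h
        exact hyΔ ⟨i - 1, by omega, by omega, rfl⟩
      exact ⟨1, le_rfl, hiN, P.mem_piece_iff.2 (Or.inr (Or.inl ⟨rfl, rfl⟩))⟩
    · exact ⟨i, hi1, hiN, P.mem_piece_iff.2 (Or.inl ⟨hlt0, hlt⟩)⟩

lemma exists_frequently_mem_piece {u : ℕ → ℝ} (hu : ∀ n, u n ∈ P.X \ P.Δ) :
    ∃ i, 1 ≤ i ∧ i ≤ P.N ∧ ∃ᶠ n in atTop, u n ∈ P.piece i := by
  have hfreq : ∃ᶠ n in atTop, ∃ i ∈ Finset.Icc 1 P.N, u n ∈ P.piece i :=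
    Frequently.of_forall fun n => by
      obtain ⟨i, h1, hN, hi⟩ := P.exists_mem_piece_of_mem_X_diff_Δ (hu n)
      exact ⟨i, Finset.mem_Icc.2 ⟨h1, hN⟩, hi⟩
  obtain ⟨i, hi, hfreq_i⟩ := (Finset.Icc 1 P.N).frequently_exists.1 hfreq
  exact ⟨i, (Finset.mem_Icc.1 hi).1, (Finset.mem_Icc.1 hi).2, hfreq_i⟩

lemma omega_eq_setOf_mapClusterPt (x : ℝ) :
    P.omega x = {y | MapClusterPt y atTop fun n => P.f^[n] x} := by
  ext y
  exact ⟨fun ⟨φ, hφ, hy⟩ => MapClusterPt.of_comp hφ.tendsto_atTop hy.mapClusterPt,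
    fun hy => hy.tendsto_subseq⟩

lemma isClosed_omega (x : ℝ) : IsClosed (P.omega x) := by
  rw [omega_eq_setOf_mapClusterPt]
  exact isClosed_setOfPred_clusterPt

lemma omega_nonempty {x : ℝ} (hx : x ∈ P.X) : (P.omega x).Nonempty := by
  obtain ⟨y, -, φ, hφ, hy⟩ := isCompact_Icc.tendsto_subseq fun n => P.hmap.iterate n hx
  exact ⟨y, φ, hφ, hy⟩

lemma omega_subset_X {x : ℝ} (hx : x ∈ P.X) : P.omega x ⊆ P.X := by
  rintro y ⟨φ, -, hy⟩
  exact isClosed_Icc.mem_of_tendsto hy (Eventually.of_forall fun n => P.hmap.iterate (φ n) hx)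

lemma isCompact_omega {x : ℝ} (hx : x ∈ P.X) : IsCompact (P.omega x) :=
  isCompact_Icc.of_isClosed_subset (P.isClosed_omega x) (P.omega_subset_X hx)

lemma fe_mem_omega_of_tendsto {x y : ℝ} {i : ℕ} (h1 : 1 ≤ i) (hN : i ≤ P.N) {φ : ℕ → ℕ}
    (hφ : StrictMono φ) (hpiece : ∀ n, P.f^[φ n] x ∈ P.piece i)
    (hy : Tendsto (fun n => P.f^[φ n] x) atTop (𝓝 y)) :
    y ∈ Icc (P.c (i - 1)) (P.c i) ∧ P.fe i y ∈ P.omega x := by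
  have hIcc : ∀ n, P.f^[φ n] x ∈ Icc (P.c (i - 1)) (P.c i) :=
    fun n => P.piece_subset_Icc h1 hN (hpiece n)
  have hyIcc : y ∈ Icc (P.c (i - 1)) (P.c i) :=
    isClosed_Icc.mem_of_tendsto hy (Eventually.of_forall hIcc)
  have hfe : Tendsto (fun n => P.fe i (P.f^[φ n] x)) atTop (𝓝 (P.fe i y)) :=
    ((P.continuousOn_fe h1 hN) y hyIcc).tendsto.comp
      (tendsto_nhdsWithin_iff.2 ⟨hy, Eventually.of_forall hIcc⟩)
  refine ⟨hyIcc, fun n => φ n + 1, hφ.add_const 1, hfe.congr fun n => ?_⟩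
  rw [Function.iterate_succ_apply', P.f_eq_fe_of_mem_piece h1 hN (hpiece n)]

lemma pseudoInvariant_omega {x : ℝ} (hx : x ∈ P.Xt) : P.PseudoInvariant (P.omega x) := by
  rintro y ⟨φ, hφ, hy⟩
  obtain ⟨i, h1, hN, hfreq⟩ := P.exists_frequently_mem_piece fun n => hx (φ n)
  obtain ⟨ψ, hψ, hpiece⟩ := extraction_of_frequently_atTop hfreq
  obtain ⟨hyIcc, hfe⟩ :=
    P.fe_mem_omega_of_tendsto h1 hN (hφ.comp hψ) hpiece (hy.comp hψ.tendsto_atTop)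
  exact ⟨i, h1, hN, hyIcc, hfe⟩

end PCIM

/-- For `x ∈ X̃`, the ω-limit set `ω(x)` is nonempty, compact and pseudo-invariant. -/
theorem stmt1 (P : PCIM) (x : ℝ) (hx : x ∈ P.Xt) :
    (P.omega x).Nonempty ∧ IsCompact (P.omega x) ∧ P.PseudoInvariant (P.omega x) :=
  ⟨P.omega_nonempty (hx 0).1, P.isCompact_omega (hx 0).1, P.pseudoInvariant_omega hx⟩
end

section
/- Let f be a piecewise contracting interval map with D ⊂ X̃. If G ⊂ X is a nonempty pseudo-invariant set, then G ∩ X̃ ≠ ∅. -/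
open Filter Topology Set

/-- If `D ⊆ X̃` and `G ⊆ X` is a nonempty pseudo-invariant set, then `G ∩ X̃ ≠ ∅`. -/
theorem stmt3 (P : PCIM) (hD : P.D ⊆ P.Xt) (G : Set ℝ) (hGX : G ⊆ P.X)
    (hne : G.Nonempty) (hpi : P.PseudoInvariant G) : (G ∩ P.Xt).Nonempty := by
  obtain ⟨x, hx⟩ := hne
  by_cases hfound : (G ∩ P.Xt).Nonempty
  · exact hfound
  exfalso
  have hmono := P.hc.monotoneOn
  -- Key: if a point of G is a boundary point `c j`, we get a contradiction.
  have key : ∀ y ∈ G, ∀ j, j ≤ P.N → y = P.c j → False := by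
    intro y hy j hj hyj
    obtain ⟨i, hi1, hiN, hyI, hfeG⟩ := hpi y hy
    have hi1N : i - 1 ≤ P.N := le_trans (Nat.sub_le _ _) hiN
    have hDmem : P.fe i y ∈ P.D := by
      rcases le_or_gt j (i - 1) with hji | hji
      · have h1 : P.c j ≤ P.c (i - 1) :=
          hmono (Set.mem_Iic.2 hj) (Set.mem_Iic.2 hi1N) hji
        have heq : y = P.c (i - 1) := le_antisymm (hyj ▸ h1) hyI.1
        rcases Nat.lt_or_ge i 2 with hi2 | hi2
        · have hie : i = 1 := by omega
          subst hie
          right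
          left
          rw [heq]
        · left; right
          refine ⟨i - 1, by omega, by omega, ?_⟩
          rw [heq]
          unfold PCIM.dplus
          congr 1
          omega
      · have hij : i ≤ j := by omega
        have h1 : P.c i ≤ P.c j :=
          hmono (Set.mem_Iic.2 hiN) (Set.mem_Iic.2 hj) hij
        have heq : y = P.c i := le_antisymm hyI.2 (hyj ▸ h1)
        rcases Nat.lt_or_ge i P.N with hiN' | hiN'
        · left; left
          exact ⟨i, hi1, hiN', by rw [heq]; rfl⟩
        · have hie : i = P.N := le_antisymm hiN hiN'
          subst hie
          right
          right
          rw [heq]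
          exact Set.mem_singleton _
    exact hfound ⟨P.fe i y, hfeG, hD hDmem⟩
  -- The whole orbit of x stays in G.
  have horb : ∀ n, P.f^[n] x ∈ G := by
    intro n
    induction n with
    | zero => simpa using hx
    | succ n ih =>
      obtain ⟨i, hi1, hiN, hyI, hfeG⟩ := hpi _ ih
      have h1 : P.f^[n] x ≠ P.c (i - 1) := fun h =>
        key _ ih (i - 1) (le_trans (Nat.sub_le _ _) hiN) h
      have h2 : P.f^[n] x ≠ P.c i := fun h => key _ ih i hiN h
      have hio : P.f^[n] x ∈ Set.Ioo (P.c (i - 1)) (P.c i) :=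
        ⟨lt_of_le_of_ne hyI.1 (Ne.symm h1), lt_of_le_of_ne hyI.2 h2⟩
      have := P.hfe_eq i hi1 hiN _ hio
      rw [Function.iterate_succ_apply', ← this]
      exact hfeG
  -- Hence x ∈ Xt, contradiction.
  apply hfound
  refine ⟨x, hx, fun n => ⟨hGX (horb n), ?_⟩⟩
  rintro ⟨i, hi1, hiN, heq⟩
  exact key _ (horb n) i (le_of_lt hiN) heq
end
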